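/- Let n ≥ 4 and let R be an algebraic curvature operator on ℝⁿ with nonnegative complex sectional curvature (weakly PIC₂). If v ∈ so(n,ℂ) satisfies rank(v) = 2, |v| = 1 and R(v,v̄) = 0, then −tr(Ric · v · v̄) ≤ scal/2. -/

import Mathlib

open Matrix BigOperators Finset

/-- An algebraic curvature operator on ℝⁿ: symmetries and first Bianchi identity. -/
def IsCurvOp (n : ℕ) (R : Fin n → Fin n → Fin n → Fin n → ℝ) : Prop :=
  (∀ i j k l, R i j k l = - R j i k l) ∧
  (∀ i j k l, R i j k l = - R i j l k) ∧
  (∀ i j k l, R i j k l = R k l i j) ∧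
  (∀ i j k l, R i j k l + R j k i l + R k i j l = 0)

/-- The complex-bilinear extension of the curvature form to `so(n,ℂ)`. -/
noncomputable def rformC {n : ℕ} (R : Fin n → Fin n → Fin n → Fin n → ℝ)
    (v w : Matrix (Fin n) (Fin n) ℂ) : ℂ :=
  (1/4) * ∑ i, ∑ j, ∑ k, ∑ l, (R i j k l : ℂ) * v i j * w k l

/-- The Ricci tensor of a curvature operator. -/
noncomputable def ricci {n : ℕ} (R : Fin n → Fin n → Fin n → Fin n → ℝ) :
    Matrix (Fin n) (Fin n) ℝ :=
  Matrix.of fun a b => ∑ i, R i a i b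

/-- The scalar curvature of a curvature operator. -/
noncomputable def scal {n : ℕ} (R : Fin n → Fin n → Fin n → Fin n → ℝ) : ℝ :=
  ∑ a, ricci R a a

/-- Entrywise complex conjugate of a matrix. -/
noncomputable def mconj {n : ℕ} (v : Matrix (Fin n) (Fin n) ℂ) : Matrix (Fin n) (Fin n) ℂ :=
  v.map (starRingEnd ℂ)

/-!
Write `x ∧ y = x yᵀ - y xᵀ`. A skew matrix of rank two is `z ∧ w` (a Plücker relation, read
off a vanishing `3 × 3` minor), and Gram–Schmidt together with `|v| = 1` turns this into
`v = x ∧ y` with `x, y` Hermitian-orthonormal. Extend `x, y` to a unitary basis `(e_α)` of `ℂⁿ`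
and let `K(α, β) = R(e_α ∧ e_β, ē_α ∧ ē_β)`, which is `≥ 0` by PIC₂. Contracting `R` over the
basis gives `-tr(Ric v v̄) = Σ_α K(α, x) + Σ_α K(α, y)` and `scal = Σ_{α,β} K(α, β)`. By
symmetry of `K`, `2 (Σ_α K(α, x) + Σ_α K(α, y))` sums `K` over the pairs meeting `{x, y}`,
counting those inside `{x, y} × {x, y}` twice; but these vanish (this is `R(v, v̄) = 0`).
-/

open scoped InnerProductSpace

namespace Matrix

section Wedge

variable {m α : Type*} [CommRing α]

def wedge (x y : m → α) : Matrix m m α := vecMulVec x y - vecMulVec y x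

lemma wedge_apply (x y : m → α) (i j : m) : wedge x y i j = x i * y j - y i * x j := rfl

lemma transpose_wedge (x y : m → α) : (wedge x y)ᵀ = -wedge x y := by
  simp [wedge, transpose_vecMulVec]

lemma wedge_comm (x y : m → α) : wedge y x = -wedge x y :=
  (neg_sub _ _).symm

lemma wedge_self (x : m → α) : wedge x x = 0 := sub_self _

lemma smul_wedge (c : α) (x y : m → α) : wedge (c • x) y = c • wedge x y := by
  simp [wedge, smul_vecMulVec, vecMulVec_smul, smul_sub]

lemma wedge_smul (c : α) (x y : m → α) : wedge x (c • y) = c • wedge x y := by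
  simp [wedge, smul_vecMulVec, vecMulVec_smul, smul_sub]

lemma wedge_add_smul_self (c : α) (x y : m → α) : wedge x (y + c • x) = wedge x y := by
  ext i j
  simp only [wedge_apply, Pi.add_apply, Pi.smul_apply, smul_eq_mul]
  ring

lemma wedge_mulVec [Fintype m] (x y u : m → α) :
    wedge x y *ᵥ u = (y ⬝ᵥ u) • x - (x ⬝ᵥ u) • y := by
  simp [wedge, sub_mulVec, vecMulVec_mulVec, op_smul_eq_smul]

lemma sum_sum_mul_wedge [Fintype m] {g : m → m → α} (hg : ∀ i j, g j i = -g i j) (x y : m → α) :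
    ∑ i, ∑ j, g i j * wedge x y i j = 2 * ∑ i, ∑ j, g i j * x i * y j := by
  have hswap : ∑ i, ∑ j, g i j * (y i * x j) = -∑ i, ∑ j, g i j * x i * y j := by
    rw [Finset.sum_comm]
    simp only [← Finset.sum_neg_distrib]
    refine Finset.sum_congr rfl fun i _ => Finset.sum_congr rfl fun j _ => ?_
    rw [hg]
    ring
  simp only [wedge_apply, mul_sub, Finset.sum_sub_distrib, hswap, mul_assoc]
  ring

end Wedge

section Rank

variable {m K : Type*} [Fintype m] [Field K]

lemma mul_eq_of_rank_le_two [CharZero K] {v : Matrix m m K} (hskew : vᵀ = -v)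
    (hrank : v.rank ≤ 2) {p q : m} (hpq : v p q ≠ 0) (i j : m) :
    v i j * v p q = v i p * v j q - v i q * v j p := by
  have hv : ∀ a b, v b a = -v a b := fun a b => by simpa using congrFun (congrFun hskew a) b
  by_contra hne
  -- the minor on rows `i, p, q` and columns `j, p, q` is `v p q` times the defect
  have hdet : (v.submatrix ![i, p, q] ![j, p, q]).det ≠ 0 := by
    rw [det_fin_three]
    simp only [submatrix_apply, Matrix.cons_val]
    rw [hv j p, hv j q, hv p q, CharZero.eq_neg_self_iff.mp (hv p p),
      CharZero.eq_neg_self_iff.mp (hv q q)]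
    intro h
    exact hne (mul_left_cancel₀ hpq (by linear_combination h))
  have := (rank_submatrix_le v ![i, p, q] ![j, p, q]).trans hrank
  rw [rank_of_isUnit _ ((isUnit_iff_isUnit_det _).2 (isUnit_iff_ne_zero.2 hdet))] at this
  simp at this

lemma exists_eq_wedge_of_rank_le_two [CharZero K] {v : Matrix m m K} (hskew : vᵀ = -v)
    (hrank : v.rank ≤ 2) : ∃ x y : m → K, v = wedge x y := by
  by_cases hv : v = 0
  · exact ⟨0, 0, by simp [hv, wedge_self]⟩
  obtain ⟨p, q, hpq⟩ : ∃ p q, v p q ≠ 0 := by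
    by_contra! h
    exact hv (ext h)
  refine ⟨(v p q)⁻¹ • fun i => v i p, fun i => v i q, ?_⟩
  ext i j
  rw [smul_wedge, smul_apply, wedge_apply, ← mul_eq_of_rank_le_two hskew hrank hpq, smul_eq_mul,
    mul_comm, mul_inv_cancel_right₀ hpq]

lemma rank_wedge_eq_two {x y u t : m → K} (hxu : x ⬝ᵥ u = 1) (hyu : y ⬝ᵥ u = 0)
    (hxt : x ⬝ᵥ t = 0) (hyt : y ⬝ᵥ t = 1) : (wedge x y).rank = 2 := by
  have hrange : LinearMap.range (wedge x y).mulVecLin = Submodule.span K {x, y} := by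
    apply le_antisymm
    · rintro _ ⟨w, rfl⟩
      rw [mulVecLin_apply, wedge_mulVec]
      exact sub_mem (Submodule.smul_mem _ _ (Submodule.subset_span (by simp)))
        (Submodule.smul_mem _ _ (Submodule.subset_span (by simp)))
    · rw [Submodule.span_le]
      rintro _ (rfl | rfl)
      · exact ⟨t, by simp [wedge_mulVec, hxt, hyt]⟩
      · exact ⟨-u, by simp [wedge_mulVec, hxu, hyu]⟩
  have hind : LinearIndependent K ![x, y] := by
    refine LinearIndependent.pair_iff.2 fun s r h => ⟨?_, ?_⟩
    · simpa [add_dotProduct, hxu, hyu] using congrArg (· ⬝ᵥ u) h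
    · simpa [add_dotProduct, hxt, hyt] using congrArg (· ⬝ᵥ t) h
  have := finrank_span_eq_card hind
  rw [range_cons_cons_empty] at this
  rw [rank, hrange, this, Fintype.card_fin]

end Rank

end Matrix

namespace Finset

variable {ι : Type*} [Fintype ι]

lemma sum_sum_eq_two_mul_sum_sum_ite_lt [LinearOrder ι] {f : ι → ι → ℝ}
    (hsymm : ∀ i j, f j i = f i j) (hdiag : ∀ i, f i i = 0) :
    ∑ i, ∑ j, f i j = 2 * ∑ i, ∑ j, if i < j then f i j else 0 := by
  have hsplit : ∀ i j, f i j = (if i < j then f i j else 0) + (if j < i then f j i else 0) := by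
    intro i j
    rcases lt_trichotomy i j with hij | rfl | hij
    · simp [hij, hij.not_gt]
    · simp [hdiag]
    · simp [hij, hij.not_gt, hsymm]
  rw [sum_congr rfl fun i _ => sum_congr rfl fun j _ => hsplit i j]
  simp only [sum_add_distrib]
  rw [sum_comm (f := fun i j => if j < i then f j i else 0)]
  ring

lemma two_mul_sum_sum_le_sum_sum [DecidableEq ι] {K : ι → ι → ℝ} (hK : ∀ α β, 0 ≤ K α β)
    (hsymm : ∀ α β, K β α = K α β) {S : Finset ι} (hS : ∀ α ∈ S, ∀ β ∈ S, K α β = 0) :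
    2 * ∑ s ∈ S, ∑ α, K α s ≤ ∑ α, ∑ β, K α β := by
  have hpoint : ∀ α β,
      (if α ∈ S then K α β else 0) + (if β ∈ S then K α β else 0) ≤ K α β := by
    intro α β
    by_cases hα : α ∈ S <;> by_cases hβ : β ∈ S <;> simp [hα, hβ, hS, hK]
  have hcol : ∑ α, ∑ β, (if β ∈ S then K α β else 0) = ∑ s ∈ S, ∑ α, K α s := by
    simp only [sum_ite_mem, univ_inter]
    exact sum_comm
  have hrow : ∑ α, ∑ β, (if α ∈ S then K α β else 0)
      = ∑ α, ∑ β, (if β ∈ S then K α β else 0) := by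
    rw [sum_comm]
    exact sum_congr rfl fun β _ => sum_congr rfl fun α _ => by rw [hsymm]
  calc 2 * ∑ s ∈ S, ∑ α, K α s
      = ∑ α, ∑ β, ((if α ∈ S then K α β else 0) + (if β ∈ S then K α β else 0)) := by
        simp only [sum_add_distrib]
        rw [hrow, hcol]
        ring
    _ ≤ ∑ α, ∑ β, K α β := sum_le_sum fun α _ => sum_le_sum fun β _ => hpoint α β

end Finset

namespace OrthonormalBasis

variable {𝕜 m ι : Type*} [RCLike 𝕜] [Fintype m] [DecidableEq m] [Fintype ι]

lemma sum_mul_star_apply (b : OrthonormalBasis ι 𝕜 (EuclideanSpace 𝕜 m)) (i k : m) :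
    ∑ α, b α i * star (b α k) = if i = k then 1 else 0 := by
  have := b.sum_inner_mul_inner (EuclideanSpace.single i 1) (EuclideanSpace.single k 1)
  simpa [EuclideanSpace.inner_single_left, EuclideanSpace.inner_single_right, eq_comm] using this

lemma sum_dotProduct_mulVec_star (b : OrthonormalBasis ι 𝕜 (EuclideanSpace 𝕜 m))
    (T : Matrix m m 𝕜) : ∑ α, ⇑(b α) ⬝ᵥ T *ᵥ star ⇑(b α) = T.trace := by
  calc ∑ α, ⇑(b α) ⬝ᵥ T *ᵥ star ⇑(b α)
      = ∑ i, ∑ k, T i k * ∑ α, b α i * star (b α k) := by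
        simp only [dotProduct, mulVec, Finset.mul_sum]
        rw [Finset.sum_comm]
        refine Finset.sum_congr rfl fun i _ => ?_
        rw [Finset.sum_comm]
        simp only [Pi.star_apply]
        refine Finset.sum_congr rfl fun k _ => Finset.sum_congr rfl fun α _ => by ring
    _ = T.trace := by
        simp only [sum_mul_star_apply]
        simp [trace]

end OrthonormalBasis

section OrthonormalPair

variable {m : Type*} [Fintype m] {x y : EuclideanSpace ℂ m}

lemma Orthonormal.dotProduct_star_pair (h : Orthonormal ℂ ![x, y]) :
    ⇑x ⬝ᵥ star ⇑x = 1 ∧ ⇑y ⬝ᵥ star ⇑y = 1 ∧ ⇑x ⬝ᵥ star ⇑y = 0 ∧ ⇑y ⬝ᵥ star ⇑x = 0 := by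
  have h := orthonormal_iff_ite.1 h
  simp only [EuclideanSpace.inner_eq_star_dotProduct] at h
  exact ⟨by simpa using h 0 0, by simpa using h 1 1, by simpa using h 1 0, by simpa using h 0 1⟩

lemma wedge_mul_wedge_star (h : Orthonormal ℂ ![x, y]) :
    wedge x y * wedge (star ⇑x) (star ⇑y) = -(vecMulVec x (star ⇑x) + vecMulVec y (star ⇑y)) := by
  obtain ⟨hxx, hyy, hxy, hyx⟩ := h.dotProduct_star_pair
  simp only [wedge, sub_mul, mul_sub, vecMulVec_mul_vecMulVec, hxx, hyy, hxy, hyx, zero_smul,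
    one_smul, vecMulVec_zero]
  abel

lemma sum_sum_ite_lt_normSq_wedge [LinearOrder m] (h : Orthonormal ℂ ![x, y]) :
    ∑ i, ∑ j, (if i < j then Complex.normSq (wedge x y i j) else 0) = 1 := by
  obtain ⟨hxx, hyy, -, -⟩ := h.dotProduct_star_pair
  have hfull : ∑ i, ∑ j, Complex.normSq (wedge x y i j) = 2 := by
    have hH : (wedge x y)ᴴ = -wedge (star ⇑x) (star ⇑y) := by
      simp [wedge, conjTranspose_vecMulVec]
    refine Complex.ofReal_injective ?_
    calc ((∑ i, ∑ j, Complex.normSq (wedge x y i j) : ℝ) : ℂ)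
        = trace (wedge x y * (wedge x y)ᴴ) := by
          push_cast
          simp [trace, mul_apply, Complex.mul_conj]
      _ = 2 := by
          rw [hH, mul_neg, wedge_mul_wedge_star h]
          simp [hxx, hyy]
          norm_num
  rw [Finset.sum_sum_eq_two_mul_sum_sum_ite_lt
    (fun i j => by rw [wedge_apply, wedge_apply, ← Complex.normSq_neg]; congr 1; ring)
    (fun i => by simp [wedge_apply, mul_comm])] at hfull
  linarith

end OrthonormalPair

lemma sum_sum_ite_lt_normSq_smul {m : Type*} [Fintype m] [LinearOrder m] (c : ℂ)
    (v : Matrix m m ℂ) :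
    ∑ i, ∑ j, (if i < j then Complex.normSq ((c • v) i j) else 0)
      = Complex.normSq c * ∑ i, ∑ j, (if i < j then Complex.normSq (v i j) else 0) := by
  simp only [Matrix.smul_apply, smul_eq_mul, Complex.normSq_mul, Finset.mul_sum, mul_ite, mul_zero]
lemma exists_orthonormal_wedge_eq_smul {m : Type*} [Fintype m] (z w : EuclideanSpace ℂ m)
    (h : wedge z w ≠ 0) :
    ∃ x y : EuclideanSpace ℂ m, Orthonormal ℂ ![x, y] ∧
      ∃ c : ℝ, 0 < c ∧ wedge z w = (c : ℂ) • wedge x y := by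
  have hz : z ≠ 0 := by
    rintro rfl
    simp [wedge] at h
  set e₁ : EuclideanSpace ℂ m := (‖z‖⁻¹ : ℂ) • z
  set w' := w - ⟪e₁, w⟫_ℂ • e₁
  have hw' : w' ≠ 0 := by
    intro h0
    rw [sub_eq_zero] at h0
    apply h
    rw [h0, smul_smul, WithLp.ofLp_smul, wedge_smul, wedge_self, smul_zero]
  set e₂ : EuclideanSpace ℂ m := (‖w'‖⁻¹ : ℂ) • w'
  have he₁ : ‖e₁‖ = 1 := norm_smul_inv_norm hz
  have he₁₂ : ⟪e₁, e₂⟫_ℂ = 0 := by simp [e₂, w', he₁]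
  refine ⟨e₁, e₂, ⟨Fin.forall_fin_two.2 ⟨he₁, norm_smul_inv_norm hw'⟩, ?_⟩,
    ‖z‖ * ‖w'‖, mul_pos (norm_pos_iff.2 hz) (norm_pos_iff.2 hw'), ?_⟩
  · intro i j hij
    fin_cases i <;> fin_cases j
    exacts [absurd rfl hij, he₁₂, inner_eq_zero_symm.1 he₁₂, absurd rfl hij]
  · have hz' : z = (‖z‖ : ℂ) • e₁ := by simp [e₁, smul_smul, hz]
    have hw : w = (‖w'‖ : ℂ) • e₂ + ⟪e₁, w⟫_ℂ • e₁ := by simp [e₂, smul_smul, hw', w']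
    conv_lhs => rw [hz', hw]
    simp only [WithLp.ofLp_add, WithLp.ofLp_smul, smul_wedge, wedge_add_smul_self, wedge_smul,
      smul_smul]
    simp

lemma exists_orthonormal_eq_wedge {m : Type*} [Fintype m] [LinearOrder m]
    {v : Matrix m m ℂ} (hskew : vᵀ = -v) (hrank : v.rank = 2)
    (hnorm : ∑ i, ∑ j, (if i < j then Complex.normSq (v i j) else 0) = 1) :
    ∃ x y : EuclideanSpace ℂ m, Orthonormal ℂ ![x, y] ∧ v = wedge x y := by
  obtain ⟨z, w, rfl⟩ := exists_eq_wedge_of_rank_le_two hskew hrank.le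
  have hne : wedge z w ≠ 0 := by
    rintro h
    rw [h, rank_zero] at hrank
    exact absurd hrank (by norm_num)
  obtain ⟨x, y, hxy, c, hc, hzw⟩ := exists_orthonormal_wedge_eq_smul (.toLp 2 z) (.toLp 2 w) hne
  have hc1 : c = 1 := by
    rw [hzw, sum_sum_ite_lt_normSq_smul, sum_sum_ite_lt_normSq_wedge hxy,
      Complex.normSq_ofReal] at hnorm
    nlinarith
  exact ⟨x, y, hxy, by rw [hzw, hc1, Complex.ofReal_one, one_smul]⟩

section Curvature

variable {n : ℕ}

def curvForm (R : Fin n → Fin n → Fin n → Fin n → ℝ) (x y u t : Fin n → ℂ) : ℂ :=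
  ∑ i, ∑ j, ∑ k, ∑ l, (R i j k l : ℂ) * x i * y j * u k * t l

def complexSecCurv (R : Fin n → Fin n → Fin n → Fin n → ℝ) (x y : Fin n → ℂ) : ℝ :=
  (curvForm R x y (star x) (star y)).re

lemma mconj_wedge (x y : Fin n → ℂ) : mconj (wedge x y) = wedge (star x) (star y) := by
  ext i j
  simp [mconj, wedge_apply]

lemma curvForm_eq_dotProduct_mulVec (R : Fin n → Fin n → Fin n → Fin n → ℝ)
    (x y u t : Fin n → ℂ) :
    curvForm R x y u t = x ⬝ᵥ (of fun i k => ∑ j, ∑ l, (R i j k l : ℂ) * y j * t l) *ᵥ u := by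
  simp only [curvForm, dotProduct, mulVec, of_apply, Finset.mul_sum, Finset.sum_mul]
  refine Finset.sum_congr rfl fun i _ => ?_
  rw [Finset.sum_comm]
  refine Finset.sum_congr rfl fun k _ => Finset.sum_congr rfl fun j _ =>
    Finset.sum_congr rfl fun l _ => by ring

section Contraction

variable {ι : Type*} [Fintype ι] (R : Fin n → Fin n → Fin n → Fin n → ℝ)
  (b : OrthonormalBasis ι ℂ (EuclideanSpace ℂ (Fin n)))

lemma sum_curvForm_orthonormalBasis (y t : Fin n → ℂ) :
    ∑ α, curvForm R (b α) y (star ⇑(b α)) t = y ⬝ᵥ (ricci R).map Complex.ofReal *ᵥ t := by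
  simp only [curvForm_eq_dotProduct_mulVec, b.sum_dotProduct_mulVec_star]
  simp only [trace, diag_apply, of_apply, dotProduct, mulVec, map_apply, ricci, Finset.mul_sum]
  push_cast
  rw [Finset.sum_comm]
  refine Finset.sum_congr rfl fun j _ => ?_
  simp only [Finset.sum_mul, Finset.mul_sum]
  rw [Finset.sum_comm]
  refine Finset.sum_congr rfl fun l _ => Finset.sum_congr rfl fun i _ => by ring

lemma sum_complexSecCurv_orthonormalBasis (y : Fin n → ℂ) :
    ∑ α, complexSecCurv R (b α) y = (y ⬝ᵥ (ricci R).map Complex.ofReal *ᵥ star y).re := by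
  rw [← sum_curvForm_orthonormalBasis R b, Complex.re_sum]
  rfl

lemma sum_sum_complexSecCurv_orthonormalBasis :
    ∑ α, ∑ β, complexSecCurv R (b α) (b β) = scal R := by
  rw [Finset.sum_comm]
  simp only [sum_complexSecCurv_orthonormalBasis, ← Complex.re_sum, b.sum_dotProduct_mulVec_star]
  simp [trace, scal]

end Contraction

namespace IsCurvOp

variable {R : Fin n → Fin n → Fin n → Fin n → ℝ} (hR : IsCurvOp n R)
include hR

lemma rformC_wedge (x y u t : Fin n → ℂ) :
    rformC R (wedge x y) (wedge u t) = curvForm R x y u t := by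
  have hkl : ∀ i j, ∑ k, ∑ l, (R i j k l : ℂ) * wedge u t k l
      = 2 * ∑ k, ∑ l, (R i j k l : ℂ) * u k * t l :=
    fun i j => sum_sum_mul_wedge (fun k l => by rw [hR.2.1 i j l k]; push_cast; ring) u t
  have hij := sum_sum_mul_wedge (g := fun i j => ∑ k, ∑ l, (R i j k l : ℂ) * u k * t l)
    (fun i j => by
      simp only [← Finset.sum_neg_distrib, hR.1 j i]; push_cast; simp only [neg_mul]) x y
  calc rformC R (wedge x y) (wedge u t)
      = (1 / 4) * ∑ i, ∑ j, (∑ k, ∑ l, (R i j k l : ℂ) * wedge u t k l) * wedge x y i j := by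
        simp only [rformC, Finset.sum_mul, mul_right_comm _ (wedge x y _ _)]
    _ = (1 / 2) * ∑ i, ∑ j, (∑ k, ∑ l, (R i j k l : ℂ) * u k * t l) * wedge x y i j := by
        simp only [hkl, mul_assoc, ← Finset.mul_sum]
        ring
    _ = curvForm R x y u t := by
        rw [hij, curvForm]
        simp only [Finset.mul_sum, Finset.sum_mul]
        refine Finset.sum_congr rfl fun i _ => Finset.sum_congr rfl fun j _ =>
          Finset.sum_congr rfl fun k _ => Finset.sum_congr rfl fun l _ => by ring

lemma rformC_wedge_mconj (x y : Fin n → ℂ) :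
    rformC R (wedge x y) (mconj (wedge x y)) = curvForm R x y (star x) (star y) := by
  rw [mconj_wedge, hR.rformC_wedge]

lemma curvForm_self_left (x u t : Fin n → ℂ) : curvForm R x x u t = 0 := by
  rw [← hR.rformC_wedge, wedge_self]
  simp [rformC]

lemma curvForm_swap (x y u t : Fin n → ℂ) : curvForm R y x t u = curvForm R x y u t := by
  rw [← hR.rformC_wedge, ← hR.rformC_wedge, wedge_comm y, wedge_comm t]
  simp [rformC]

lemma complexSecCurv_self (x : Fin n → ℂ) : complexSecCurv R x x = 0 := by
  simp [complexSecCurv, hR.curvForm_self_left]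

lemma complexSecCurv_comm (x y : Fin n → ℂ) : complexSecCurv R y x = complexSecCurv R x y := by
  rw [complexSecCurv, complexSecCurv, hR.curvForm_swap]

lemma ricci_transpose : (ricci R)ᵀ = ricci R := by
  ext a b
  simp [ricci, hR.2.2.1 _ a _ b]

lemma trace_ricci_mul_wedge_mul_mconj {x y : EuclideanSpace ℂ (Fin n)}
    (h : Orthonormal ℂ ![x, y]) :
    trace ((ricci R).map Complex.ofReal * wedge x y * mconj (wedge x y))
      = -(⇑x ⬝ᵥ (ricci R).map Complex.ofReal *ᵥ star ⇑x
        + ⇑y ⬝ᵥ (ricci R).map Complex.ofReal *ᵥ star ⇑y) := by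
  have hsymm : ∀ z : Fin n → ℂ, ((ricci R).map Complex.ofReal *ᵥ z) ⬝ᵥ star z
      = z ⬝ᵥ (ricci R).map Complex.ofReal *ᵥ star z := by
    intro z
    rw [dotProduct_mulVec, ← mulVec_transpose, ← transpose_map, hR.ricci_transpose]
  rw [mconj_wedge, mul_assoc, wedge_mul_wedge_star h]
  simp only [mul_neg, mul_add, mul_vecMulVec, trace_neg, trace_add, trace_vecMulVec, hsymm]

variable (hpic2 : ∀ v : Matrix (Fin n) (Fin n) ℂ, vᵀ = -v → v.rank = 2 →
  0 ≤ (rformC R v (mconj v)).re)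
include hpic2

lemma complexSecCurv_nonneg_of_orthonormal {x y : EuclideanSpace ℂ (Fin n)}
    (h : Orthonormal ℂ ![x, y]) : 0 ≤ complexSecCurv R x y := by
  obtain ⟨hxx, hyy, hxy, hyx⟩ := h.dotProduct_star_pair
  have := hpic2 _ (transpose_wedge _ _) (rank_wedge_eq_two hxx hyx hxy hyy)
  rwa [hR.rformC_wedge_mconj] at this

lemma complexSecCurv_orthonormalBasis_nonneg {ι : Type*} [Fintype ι]
    (b : OrthonormalBasis ι ℂ (EuclideanSpace ℂ (Fin n))) (α β : ι) :
    0 ≤ complexSecCurv R (b α) (b β) := by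
  rcases eq_or_ne α β with rfl | hne
  · rw [hR.complexSecCurv_self]
  · refine hR.complexSecCurv_nonneg_of_orthonormal hpic2 ?_
    have hcomp : ⇑b ∘ ![α, β] = ![b α, b β] := by
      funext i
      fin_cases i <;> rfl
    exact hcomp ▸ b.orthonormal.comp ![α, β] (injective_pair_iff_ne.2 hne)

end IsCurvOp

end Curvature

theorem stmt2_general (n : ℕ) (R : Fin n → Fin n → Fin n → Fin n → ℝ)
    (hR : IsCurvOp n R)
    -- weakly PIC₂: `R(v,v̄) ≥ 0` for every rank-2 element `v ∈ so(n,ℂ)`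
    (hpic2 : ∀ v : Matrix (Fin n) (Fin n) ℂ, vᵀ = -v → v.rank = 2 →
      0 ≤ (rformC R v (mconj v)).re)
    (v : Matrix (Fin n) (Fin n) ℂ) (hskew : vᵀ = -v) (hrank : v.rank = 2)
    (hnorm : (∑ i, ∑ j, if i < j then Complex.normSq (v i j) else 0) = 1)
    (hzero : rformC R v (mconj v) = 0) :
    -(Matrix.trace ((ricci R).map Complex.ofReal * v * mconj v)).re ≤ scal R / 2 := by
  classical
  obtain ⟨x, y, hxy, rfl⟩ := exists_orthonormal_eq_wedge hskew hrank hnorm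
  obtain ⟨u, b, hxyu, hb⟩ := hxy.toSubtypeRange.exists_orthonormalBasis_extension
  have hx : x ∈ u := hxyu ⟨0, rfl⟩
  have hy : y ∈ u := hxyu ⟨1, rfl⟩
  have hbx : b ⟨x, hx⟩ = x := congrFun hb _
  have hby : b ⟨y, hy⟩ = y := congrFun hb _
  have hne : (⟨x, hx⟩ : u) ≠ ⟨y, hy⟩ :=
    Subtype.coe_ne_coe.1 (hxy.linearIndependent.injective.ne zero_ne_one)
  have hKxy : complexSecCurv R x y = 0 := by
    rw [complexSecCurv, ← hR.rformC_wedge_mconj, hzero, Complex.zero_re]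
  have key := Finset.two_mul_sum_sum_le_sum_sum (K := fun α β => complexSecCurv R (b α) (b β))
    (hR.complexSecCurv_orthonormalBasis_nonneg hpic2 b) (fun α β => hR.complexSecCurv_comm _ _)
    (S := {⟨x, hx⟩, ⟨y, hy⟩}) (by
      simp only [Finset.mem_insert, Finset.mem_singleton]
      rintro α (rfl | rfl) β (rfl | rfl) <;>
        simp [hbx, hby, hR.complexSecCurv_self, hKxy, hR.complexSecCurv_comm x y])
  rw [Finset.sum_pair hne, sum_sum_complexSecCurv_orthonormalBasis, hbx, hby,
    sum_complexSecCurv_orthonormalBasis, sum_complexSecCurv_orthonormalBasis] at key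
  rw [hR.trace_ricci_mul_wedge_mul_mconj hxy, Complex.neg_re, neg_neg, Complex.add_re]
  linarith

/-- if `R` is an algebraic curvature operator on ℝⁿ (n ≥ 4) with nonnegative
complex sectional curvature (weakly PIC₂) and `v ∈ so(n,ℂ)` has rank 2, `|v| = 1` and
`R(v,v̄) = 0`, then `−tr(Ric·v·v̄) ≤ scal/2`. -/
theorem stmt2 (n : ℕ) (hn : 4 ≤ n) (R : Fin n → Fin n → Fin n → Fin n → ℝ)
    (hR : IsCurvOp n R)
    -- weakly PIC₂: `R(v,v̄) ≥ 0` for every rank-2 element `v ∈ so(n,ℂ)`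
    (hpic2 : ∀ v : Matrix (Fin n) (Fin n) ℂ, vᵀ = -v → v.rank = 2 →
      0 ≤ (rformC R v (mconj v)).re)
    (v : Matrix (Fin n) (Fin n) ℂ) (hskew : vᵀ = -v) (hrank : v.rank = 2)
    (hnorm : (∑ i, ∑ j, if i < j then Complex.normSq (v i j) else 0) = 1)
    (hzero : rformC R v (mconj v) = 0) :
    -(Matrix.trace ((ricci R).map Complex.ofReal * v * mconj v)).re ≤ scal R / 2 :=
  stmt2_general n R hR hpic2 v hskew hrank hnorm hzero
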